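/- Let X be a real normed space partially ordered by a nontrivial pointed convex cone C, let B be a bounded base of C such that (C, C_{(B,δ)}) has the strict separation property for some 0 < δ < min{1, δ_B}, and let A ⊆ X. If there exists x₀ ∈ A such that the section (x₀ − C_{(B,δ)}) ∩ A is weakly compact, then (x₀ − C_{(B,δ)}) ∩ A ∩ GHe(A, C) ≠ ∅. -/
import Mathlib


open Set Metric Pointwise

namespace HenigPaper

variable {X : Type*} [NormedAddCommGroup X] [NormedSpace ℝ X]

/-- `C` is a cone: closed under multiplication by nonnegative scalars. -/
def IsCone (C : Set X) : Prop :=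
  ∀ ⦃l : ℝ⦄, 0 ≤ l → ∀ ⦃x⦄, x ∈ C → l • x ∈ C

/-- `C` is a nontrivial cone: `{0} ⊊ C ⊊ X`. -/
def NontrivialCone (C : Set X) : Prop :=
  IsCone C ∧ ({(0 : X)} : Set X) ⊂ C ∧ C ≠ Set.univ

/-- A cone is pointed if `(-C) ∩ C = {0}`. -/
def PointedCone' (C : Set X) : Prop := (-C) ∩ C = ({(0 : X)} : Set X)

/-- Convexity of a cone in the sense `C + C = C`. -/
def ConeConvex (C : Set X) : Prop := C + C = C

/-- The strict separation property (SSP) for the pair of cones `(C, K)`. -/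
def SSP (C K : Set X) : Prop :=
  (0 : X) ∉ closure (convexHull ℝ (C ∩ sphere (0 : X) 1) -
    convexHull ℝ ((frontier K ∩ sphere (0 : X) 1) ∪ {(0 : X)}))

/-- The Bishop–Phelps cone `C(f, α) = {x : f x ≥ α ‖x‖}`. -/
def BPCone (f : X →L[ℝ] ℝ) (α : ℝ) : Set X := {x : X | α * ‖x‖ ≤ f x}

/-- The sublevel set `S(f, α) = {x : f x + α ‖x‖ ≤ 0}`. -/
def Ssub (f : X →L[ℝ] ℝ) (α : ℝ) : Set X := {x : X | f x + α * ‖x‖ ≤ 0}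

/-- `f ∈ C^#`: strictly positive functionals on `C`. -/
def StrictlyPos (C : Set X) (f : X →L[ℝ] ℝ) : Prop :=
  ∀ x ∈ C, x ≠ 0 → 0 < f x

/-- `(f, α) ∈ C^{a*}`: the augmented dual cone. -/
def MemAugDual (C : Set X) (f : X →L[ℝ] ℝ) (α : ℝ) : Prop :=
  StrictlyPos C f ∧ 0 ≤ α ∧ ∀ x ∈ C, α * ‖x‖ ≤ f x

/-- `(f, α) ∈ C^{a#}_+`. -/
def MemAugDualSharpPlus (C : Set X) (f : X →L[ℝ] ℝ) (α : ℝ) : Prop :=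
  StrictlyPos C f ∧ 0 < α ∧ ∀ x ∈ C, x ≠ 0 → α * ‖x‖ < f x

/-- `B` is a base for the cone `C`. -/
def IsBase (C B : Set X) : Prop :=
  B.Nonempty ∧ Convex ℝ B ∧ B ⊆ C ∧ (0 : X) ∉ closure B ∧
    ∀ x ∈ C, x ≠ (0 : X) → ∃! p : ℝ × X, 0 < p.1 ∧ p.2 ∈ B ∧ x = p.1 • p.2

/-- The cone `C` has a bounded base. -/
def HasBoundedBase (C : Set X) : Prop :=
  ∃ B : Set X, IsBase C B ∧ Bornology.IsBounded B

/-- The cone generated by a set `A`. -/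
def coneGen (A : Set X) : Set X := {y : X | ∃ l : ℝ, 0 ≤ l ∧ ∃ a ∈ A, y = l • a}

/-- The `ε`-conic neighbourhood `C_ε` of a cone `C`. -/
def epsCone (C : Set X) (ε : ℝ) : Set X :=
  coneGen {x : X | infDist x (C ∩ sphere (0 : X) 1) ≤ ε}

/-- `δ_B = inf {‖b‖ : b ∈ B}`. -/
noncomputable def deltaB (B : Set X) : ℝ := sInf ((fun b => ‖b‖) '' B)

/-- The Henig dilating cone `C_{(B,ε)}`. -/
def henigCone (B : Set X) (ε : ℝ) : Set X :=
  coneGen {x : X | infDist x B ≤ ε}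

/-- The set of efficient (Pareto minimal) points of `A` with respect to the cone `C`. -/
def MinSet (A C : Set X) : Set X :=
  {x ∈ A | (A - ({x} : Set X)) ∩ (-C) = ({(0 : X)} : Set X)}

/-- The set of Henig global proper efficient points of `A` with respect to `C`. -/
def GHe (A C : Set X) : Set X :=
  {x : X | ∃ K : Set X, IsCone K ∧ ConeConvex K ∧ C \ {(0 : X)} ⊆ interior K ∧
    x ∈ MinSet A K}

/-- A subset of `X` is weakly compact if it is compact in the weak topology. -/
def WeaklyCompact (A : Set X) : Prop :=
  IsCompact ((toWeakSpace ℝ X) '' A)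

end HenigPaper

open HenigPaper

variable {X : Type*} [NormedAddCommGroup X] [NormedSpace ℝ X]


section AuxStmt13

lemma aux_zero_mem_coneGen {A : Set X} (hA : A.Nonempty) : (0 : X) ∈ coneGen A := by
  obtain ⟨a, ha⟩ := hA
  exact ⟨0, le_refl 0, a, ha, (zero_smul ℝ a).symm⟩

lemma aux_isCone_coneGen (A : Set X) : IsCone (coneGen A) := by
  rintro l hl x ⟨m, hm, a, ha, rfl⟩
  exact ⟨l * m, mul_nonneg hl hm, a, ha, smul_smul l m a⟩

lemma aux_coneGen_mono {A A' : Set X} (h : A ⊆ A') : coneGen A ⊆ coneGen A' := by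
  rintro x ⟨l, hl, a, ha, rfl⟩; exact ⟨l, hl, a, h ha, rfl⟩

lemma aux_add_mem_coneGen {A : Set X} (hA : Convex ℝ A) :
    ∀ x ∈ coneGen A, ∀ y ∈ coneGen A, x + y ∈ coneGen A := by
  rintro _ ⟨l, hl, a, ha, rfl⟩ _ ⟨m, hm, b, hb, rfl⟩
  rcases eq_or_lt_of_le (add_nonneg hl hm) with h | h
  · have hl0 : l = 0 := by linarith
    have hm0 : m = 0 := by linarith
    rw [hl0, hm0]
    simpa using aux_zero_mem_coneGen ⟨a, ha⟩
  · have ht : 0 < l + m := h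
    have hmem : (l / (l + m)) • a + (m / (l + m)) • b ∈ A :=
      hA ha hb (div_nonneg hl ht.le) (div_nonneg hm ht.le) (by field_simp)
    refine ⟨l + m, ht.le, (l / (l + m)) • a + (m / (l + m)) • b, hmem, ?_⟩
    have e1 : (l + m) * (l / (l + m)) = l := by field_simp
    have e2 : (l + m) * (m / (l + m)) = m := by field_simp
    rw [smul_add, smul_smul, smul_smul, e1, e2]

lemma aux_convex_Dset {B : Set X} (hB : Convex ℝ B) (hne : B.Nonempty) (ε : ℝ) :
    Convex ℝ {x : X | infDist x B ≤ ε} := by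
  intro x hx y hy p q hp hq hpq
  simp only [mem_setOf_eq] at hx hy ⊢
  have key : ∀ η : ℝ, 0 < η → infDist (p • x + q • y) B ≤ ε + η := by
    intro η hη
    obtain ⟨bx, hbx, hdx⟩ := (infDist_lt_iff hne).1 (show infDist x B < ε + η by linarith)
    obtain ⟨by', hby, hdy⟩ := (infDist_lt_iff hne).1 (show infDist y B < ε + η by linarith)
    have hmem : p • bx + q • by' ∈ B := hB hbx hby hp hq hpq
    have hdiff : p • x + q • y - (p • bx + q • by') = p • (x - bx) + q • (y - by') := by
      rw [smul_sub, smul_sub]; abel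
    calc infDist (p • x + q • y) B ≤ dist (p • x + q • y) (p • bx + q • by') :=
          infDist_le_dist_of_mem hmem
      _ ≤ p * dist x bx + q * dist y by' := by
          rw [dist_eq_norm, dist_eq_norm, dist_eq_norm, hdiff]
          refine (norm_add_le _ _).trans ?_
          rw [norm_smul, norm_smul, Real.norm_of_nonneg hp, Real.norm_of_nonneg hq]
      _ ≤ p * (ε + η) + q * (ε + η) := by
          have h1 : dist x bx ≤ ε + η := hdx.le
          have h2 : dist y by' ≤ ε + η := hdy.le
          have := mul_le_mul_of_nonneg_left h1 hp
          have := mul_le_mul_of_nonneg_left h2 hq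
          linarith
      _ = ε + η := by rw [← add_mul, hpq, one_mul]
  by_contra hcon
  push_neg at hcon
  have := key ((infDist (p • x + q • y) B - ε) / 2) (by linarith)
  linarith

lemma aux_norm_lb {B : Set X} (hne : B.Nonempty) {ε : ℝ} {x : X}
    (hx : infDist x B ≤ ε) : deltaB B - ε ≤ ‖x‖ := by
  by_contra h
  push_neg at h
  have h2 : infDist x B < deltaB B - ‖x‖ := lt_of_le_of_lt hx (by linarith)
  obtain ⟨b, hb, hd⟩ := (infDist_lt_iff hne).1 h2
  have hdb : deltaB B ≤ ‖b‖ :=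
    csInf_le ⟨0, by rintro r ⟨c, -, rfl⟩; exact norm_nonneg c⟩ ⟨b, hb, rfl⟩
  have h3 : ‖b‖ - ‖x‖ ≤ dist x b := by
    rw [dist_eq_norm, ← norm_sub_rev]
    exact (norm_sub_norm_le b x)
  linarith

lemma aux_bound {B : Set X} (hBb : Bornology.IsBounded B) (hne : B.Nonempty) (ε : ℝ) :
    ∃ M : ℝ, 0 < M ∧ ∀ x : X, infDist x B ≤ ε → ‖x‖ ≤ M := by
  obtain ⟨R, hR⟩ := isBounded_iff_forall_norm_le.1 hBb
  refine ⟨max (R + ε + 1) 1, lt_of_lt_of_le one_pos (le_max_right _ _), ?_⟩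
  intro x hx
  obtain ⟨b, hb, hd⟩ := (infDist_lt_iff hne).1 (lt_of_le_of_lt hx (lt_add_one ε))
  have h1 : ‖x‖ - ‖b‖ ≤ dist x b := by
    rw [dist_eq_norm]; exact norm_sub_norm_le x b
  have h2 := hR b hb
  refine le_trans ?_ (le_max_left _ _)
  linarith

lemma aux_functional {B : Set X} (hBconv : Convex ℝ B) (hne : B.Nonempty)
    (hBb : Bornology.IsBounded B) {ε : ℝ} (hε : 0 < ε) (hεδ : ε < deltaB B) :
    ∃ c : ℝ, 0 < c ∧ ∃ f : X →L[ℝ] ℝ, ∀ y ∈ closure (henigCone B ε), c * ‖y‖ ≤ f y := by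
  have hDclosed : IsClosed {x : X | infDist x B ≤ ε} :=
    isClosed_le (continuous_infDist_pt B) continuous_const
  have hDconv : Convex ℝ {x : X | infDist x B ≤ ε} := aux_convex_Dset hBconv hne ε
  have h0D : (0 : X) ∉ {x : X | infDist x B ≤ ε} := by
    intro h
    have := aux_norm_lb hne h
    rw [norm_zero] at this
    linarith
  obtain ⟨f, u, hfu, hub⟩ := geometric_hahn_banach_point_closed hDconv hDclosed h0D
  have hu : 0 < u := by simpa using hfu
  obtain ⟨M, hM, hMb⟩ := aux_bound hBb hne ε
  refine ⟨u / M, div_pos hu hM, f, ?_⟩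
  have hK : ∀ y ∈ henigCone B ε, u / M * ‖y‖ ≤ f y := by
    rintro _ ⟨l, hl, a, ha, rfl⟩
    have h1 : ‖l • a‖ = l * ‖a‖ := by rw [norm_smul, Real.norm_of_nonneg hl]
    have h2 : f (l • a) = l * f a := by rw [map_smul, smul_eq_mul]
    have h3 : ‖a‖ ≤ M := hMb a ha
    have h4 : u ≤ f a := (hub a ha).le
    rw [h1, h2]
    have h5 : u / M * ‖a‖ ≤ u := by
      rw [div_mul_eq_mul_div, div_le_iff₀ hM]
      exact mul_le_mul_of_nonneg_left h3 hu.le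
    calc u / M * (l * ‖a‖) = l * (u / M * ‖a‖) := by ring
      _ ≤ l * u := mul_le_mul_of_nonneg_left h5 hl
      _ ≤ l * f a := mul_le_mul_of_nonneg_left h4 hl
  intro y hy
  exact closure_minimal hK
    (isClosed_le (continuous_const.mul continuous_norm) f.continuous) hy

lemma aux_interior {C B : Set X} (hB : IsBase C B) {ε : ℝ} (hε : 0 < ε) :
    C \ {(0 : X)} ⊆ interior (henigCone B ε) := by
  rintro x ⟨hxC, hx0⟩
  have hx0' : x ≠ 0 := by simpa using hx0
  obtain ⟨⟨l, b⟩, ⟨hl, hb, hx⟩, -⟩ := hB.2.2.2.2 x hxC hx0'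
  have hl' : l ≠ 0 := ne_of_gt hl
  refine mem_interior.2 ⟨ball x (l * ε), ?_, isOpen_ball, mem_ball_self (mul_pos hl hε)⟩
  intro y hy
  refine ⟨l, hl.le, l⁻¹ • y, ?_, (smul_inv_smul₀ hl' y).symm⟩
  show infDist (l⁻¹ • y) B ≤ ε
  have h1 : l⁻¹ • y - b = l⁻¹ • (y - x) := by
    rw [hx, smul_sub, smul_smul, inv_mul_cancel₀ hl', one_smul]
  have h2 : dist (l⁻¹ • y) b < ε := by
    rw [dist_eq_norm, h1, norm_smul, Real.norm_of_nonneg (inv_nonneg.2 hl.le)]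
    rw [mem_ball, dist_eq_norm] at hy
    calc l⁻¹ * ‖y - x‖ < l⁻¹ * (l * ε) := mul_lt_mul_of_pos_left hy (inv_pos.2 hl)
      _ = ε := by field_simp
  exact (infDist_le_dist_of_mem hb).trans h2.le

lemma aux_weak_closed {s : Set X} (hconv : Convex ℝ s) (hcl : IsClosed s) :
    IsClosed (toWeakSpace ℝ X '' s) := by
  have h := hconv.toWeakSpace_closure (𝕜 := ℝ)
  rw [hcl.closure_eq] at h
  rw [h]
  exact isClosed_closure

lemma aux_mem_singleton_sub {a y : X} {Z : Set X} :
    y ∈ ({a} : Set X) - Z ↔ ∃ z ∈ Z, y = a - z := by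
  constructor
  · intro h
    rw [Set.mem_sub] at h
    obtain ⟨u, hu, z, hz, huz⟩ := h
    rw [Set.mem_singleton_iff] at hu
    exact ⟨z, hz, by rw [← huz, hu]⟩
  · rintro ⟨z, hz, rfl⟩
    rw [Set.mem_sub]
    exact ⟨a, Set.mem_singleton a, z, hz, rfl⟩

lemma aux_finset_min {α : Type*} {c : Set (Set α)} (hchain : IsChain (· ⊆ ·) c)
    (u : Finset ↥c) : u.Nonempty → ∃ F₀ ∈ u, ∀ F ∈ u, (F₀ : Set α) ⊆ (F : Set α) := by
  classical
  induction u using Finset.induction_on with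
  | empty => intro h; simp at h
  | @insert G s hGs ih =>
    intro _
    rcases s.eq_empty_or_nonempty with rfl | hsne
    · refine ⟨G, Finset.mem_insert_self _ _, ?_⟩
      intro F hF
      rcases Finset.mem_insert.1 hF with rfl | hF
      · exact Set.Subset.refl _
      · simp at hF
    · obtain ⟨F₀, hF₀s, hmin⟩ := ih hsne
      by_cases h : (F₀ : Set α) ⊆ (G : Set α)
      · refine ⟨F₀, Finset.mem_insert_of_mem hF₀s, ?_⟩
        intro F hF
        rcases Finset.mem_insert.1 hF with rfl | hF
        · exact h
        · exact hmin F hF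
      · have hcomp : (G : Set α) ⊆ (F₀ : Set α) := by
          rcases eq_or_ne (G : Set α) (F₀ : Set α) with he | hne
          · rw [he]
          · rcases hchain G.2 F₀.2 hne with h1 | h1
            · exact h1
            · exact absurd h1 h
        refine ⟨G, Finset.mem_insert_self _ _, ?_⟩
        intro F hF
        rcases Finset.mem_insert.1 hF with rfl | hF
        · exact Set.Subset.refl _
        · exact hcomp.trans (hmin F hF)

end AuxStmt13

/-- Existence of Henig global proper efficient points in a weakly compact
section given by a Henig dilating cone. -/
theorem stmt13 (C : Set X) (hC : NontrivialCone C) (hpt : PointedCone' C)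
    (hconv : ConeConvex C) (B : Set X) (hB : IsBase C B) (hBb : Bornology.IsBounded B)
    (δ : ℝ) (h0 : 0 < δ) (h1 : δ < 1) (h2 : δ < deltaB B)
    (hssp : SSP C (henigCone B δ)) (A : Set X) (x₀ : X) (hx₀ : x₀ ∈ A)
    (hcpt : WeaklyCompact ((({x₀} : Set X) - henigCone B δ) ∩ A)) :
    ((({x₀} : Set X) - henigCone B δ) ∩ A ∩ GHe A C).Nonempty := by
  classical
  obtain ⟨hBne, hBconv, hBC, hB0cl, hBdecomp⟩ := hB
  have hδ2 : 0 < δ / 2 := by linarith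
  have hδ2' : δ / 2 < deltaB B := by linarith
  set K : Set X := henigCone B δ with hKdef
  set K' : Set X := henigCone B (δ / 2) with hK'def
  set W : Set X := closure K' with hWdef
  have hDne : ∀ ε : ℝ, 0 ≤ ε → ({x : X | infDist x B ≤ ε}).Nonempty := by
    intro ε hε
    obtain ⟨b, hb⟩ := hBne
    exact ⟨b, by simp [infDist_zero_of_mem hb, hε]⟩
  have hK0 : (0 : X) ∈ K := aux_zero_mem_coneGen (hDne δ h0.le)
  have hK'0 : (0 : X) ∈ K' := aux_zero_mem_coneGen (hDne _ hδ2.le)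
  have hW0 : (0 : X) ∈ W := subset_closure hK'0
  have hK'K : K' ⊆ K := aux_coneGen_mono (fun x hx => by
    simp only [mem_setOf_eq] at hx ⊢; linarith)
  have hKadd : ∀ x ∈ K, ∀ y ∈ K, x + y ∈ K :=
    aux_add_mem_coneGen (aux_convex_Dset hBconv hBne δ)
  have hK'add : ∀ x ∈ K', ∀ y ∈ K', x + y ∈ K' :=
    aux_add_mem_coneGen (aux_convex_Dset hBconv hBne (δ / 2))
  have hK'conv : Convex ℝ K' := by
    intro x hx y hy p q hp hq _
    exact hK'add _ (aux_isCone_coneGen _ hp hx) _ (aux_isCone_coneGen _ hq hy)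
  have hWconv : Convex ℝ W := hK'conv.closure
  have hWclosed : IsClosed W := isClosed_closure
  have hWadd1 : ∀ x ∈ K', ∀ y ∈ W, x + y ∈ W := by
    intro x hx y hy
    have h1 : (x + ·) '' closure K' ⊆ closure ((x + ·) '' K') :=
      image_closure_subset_closure_image (continuous_add_left x)
    have h2 : (x + ·) '' K' ⊆ W := by
      rintro _ ⟨z, hz, rfl⟩; exact subset_closure (hK'add _ hx _ hz)
    exact (hWclosed.closure_subset_iff.2 h2) (h1 ⟨y, hy, rfl⟩)
  have hWadd : ∀ x ∈ W, ∀ y ∈ W, x + y ∈ W := by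
    intro x hx y hy
    have h1 : (· + y) '' closure K' ⊆ closure ((· + y) '' K') :=
      image_closure_subset_closure_image (continuous_add_right y)
    have h2 : (· + y) '' K' ⊆ W := by
      rintro _ ⟨z, hz, rfl⟩; exact hWadd1 _ hz _ hy
    exact (hWclosed.closure_subset_iff.2 h2) (h1 ⟨x, hx, rfl⟩)
  obtain ⟨cp, hcp, f, hf⟩ := aux_functional hBconv hBne hBb hδ2 hδ2'
  have hWpointed : ∀ y : X, y ∈ W → -y ∈ W → y = 0 := by
    intro y hy1 hy2
    have a1 := hf y hy1
    have a2 := hf (-y) hy2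
    rw [map_neg, norm_neg] at a2
    have hyn : ‖y‖ ≤ 0 := by nlinarith
    exact norm_le_zero_iff.1 hyn
  set S : Set X := (({x₀} : Set X) - K) ∩ A with hSdef
  have hTcpt : IsCompact (toWeakSpace ℝ X '' S) := hcpt
  have hx₀S : x₀ ∈ S := ⟨aux_mem_singleton_sub.2 ⟨0, hK0, (sub_zero x₀).symm⟩, hx₀⟩
  have hinj : Function.Injective (toWeakSpace ℝ X) := (toWeakSpace ℝ X).injective
  set 𝒮 : Set (Set X) := {F | ∃ a ∈ S, F = S ∩ (({a} : Set X) - W)} with h𝒮def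
  have hmem𝒮 : ∀ a ∈ S, S ∩ (({a} : Set X) - W) ∈ 𝒮 := fun a ha => ⟨a, ha, rfl⟩
  have hself : ∀ a ∈ S, a ∈ S ∩ (({a} : Set X) - W) :=
    fun a ha => ⟨ha, aux_mem_singleton_sub.2 ⟨0, hW0, (sub_zero a).symm⟩⟩
  have hclosedaW : ∀ a : X, IsClosed (toWeakSpace ℝ X '' (({a} : Set X) - W)) := by
    intro a
    apply aux_weak_closed ((convex_singleton a).sub hWconv)
    have he : ({a} : Set X) - W = (fun w => a - w) '' W := by
      ext y
      simp only [Set.mem_image]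
      rw [aux_mem_singleton_sub]
      constructor
      · rintro ⟨z, hz, rfl⟩; exact ⟨z, hz, rfl⟩
      · rintro ⟨z, hz, rfl⟩; exact ⟨z, hz, rfl⟩
    rw [he]
    exact (Homeomorph.isClosed_image (Homeomorph.subLeft a)).2 hWclosed
  obtain ⟨m, hm⟩ : ∃ m, Minimal (· ∈ 𝒮) m := by
    apply zorn_superset
    intro c hc𝒮 hchain
    rcases c.eq_empty_or_nonempty with rfl | hcne
    · exact ⟨S ∩ (({x₀} : Set X) - W), hmem𝒮 x₀ hx₀S, by simp⟩
    have hpt : ∀ F : ↥c, ∃ a, a ∈ S ∧ (F : Set X) = S ∩ (({a} : Set X) - W) :=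
      fun F => hc𝒮 F.2
    choose pt hptS hpteq using hpt
    have : Nonempty ↥c := hcne.to_subtype
    have hne2 : ((toWeakSpace ℝ X '' S) ∩
        ⋂ (F : ↥c), toWeakSpace ℝ X '' (({pt F} : Set X) - W)).Nonempty := by
      apply hTcpt.inter_iInter_nonempty
      · intro F; exact hclosedaW _
      · intro u
        rcases u.eq_empty_or_nonempty with rfl | hune
        · have hne3 : (toWeakSpace ℝ X '' S).Nonempty :=
            ⟨toWeakSpace ℝ X x₀, mem_image_of_mem _ hx₀S⟩
          simpa using hne3
        obtain ⟨F₀, hF₀u, hmin⟩ := aux_finset_min hchain u hune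
        refine ⟨toWeakSpace ℝ X (pt F₀), mem_image_of_mem _ (hptS F₀), ?_⟩
        rw [Set.mem_iInter₂]
        intro F hFu
        have hptF₀ : pt F₀ ∈ (F₀ : Set X) := by
          rw [hpteq F₀]; exact hself _ (hptS F₀)
        have h1 : pt F₀ ∈ (F : Set X) := hmin F hFu hptF₀
        rw [hpteq F] at h1
        exact mem_image_of_mem _ h1.2
    obtain ⟨z', hzT, hzI⟩ := hne2
    obtain ⟨z, hzS, rfl⟩ := hzT
    have hzF : ∀ F : ↥c, z ∈ (F : Set X) := by
      intro F
      have h1 := Set.mem_iInter.1 hzI F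
      obtain ⟨w, hw, hwz⟩ := h1
      have hw' : w = z := hinj hwz
      rw [hpteq F]
      exact ⟨hzS, hw' ▸ hw⟩
    refine ⟨S ∩ (({z} : Set X) - W), hmem𝒮 z hzS, ?_⟩
    intro F hFc
    have hFeq : F = S ∩ (({pt ⟨F, hFc⟩} : Set X) - W) := hpteq ⟨F, hFc⟩
    rw [hFeq]
    rintro y ⟨hyS, hyW⟩
    refine ⟨hyS, ?_⟩
    obtain ⟨w1, hw1, rfl⟩ := aux_mem_singleton_sub.1 hyW
    have hz' : z ∈ S ∩ (({pt ⟨F, hFc⟩} : Set X) - W) := hFeq ▸ hzF ⟨F, hFc⟩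
    obtain ⟨w2, hw2, hz2⟩ := aux_mem_singleton_sub.1 hz'.2
    refine aux_mem_singleton_sub.2 ⟨w2 + w1, hWadd _ hw2 _ hw1, ?_⟩
    rw [hz2]; abel
  obtain ⟨a, haS, hma⟩ := hm.1
  have hamem : a ∈ m := by rw [hma]; exact hself a haS
  have hminpt : ∀ b ∈ S, a - b ∈ W → b - a ∈ W := by
    intro b hbS hab
    have hsub : S ∩ (({b} : Set X) - W) ⊆ m := by
      rw [hma]
      rintro y ⟨hyS, hyW⟩
      obtain ⟨w1, hw1, rfl⟩ := aux_mem_singleton_sub.1 hyW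
      exact ⟨hyS, aux_mem_singleton_sub.2 ⟨(a - b) + w1, hWadd _ hab _ hw1, by abel⟩⟩
    have hrev : m ⊆ S ∩ (({b} : Set X) - W) := hm.2 (hmem𝒮 b hbS) hsub
    obtain ⟨-, hw⟩ := hrev hamem
    obtain ⟨w, hwW, heq⟩ := aux_mem_singleton_sub.1 hw
    have hba : b - a = w := by rw [heq]; abel
    rw [hba]; exact hwW
  refine ⟨a, haS, K', aux_isCone_coneGen _, ?_, ?_, ?_⟩
  · -- ConeConvex K'
    apply Set.Subset.antisymm
    · intro z hz
      rw [Set.mem_add] at hz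
      obtain ⟨x, hx, y, hy, rfl⟩ := hz
      exact hK'add _ hx _ hy
    · intro x hx
      rw [Set.mem_add]
      exact ⟨x, hx, 0, hK'0, add_zero x⟩
  · exact aux_interior ⟨hBne, hBconv, hBC, hB0cl, hBdecomp⟩ hδ2
  · refine ⟨haS.2, ?_⟩
    apply Set.Subset.antisymm
    · rintro y ⟨hy1, hy2⟩
      rw [Set.mem_sub] at hy1
      obtain ⟨b, hbA, t, ht, rfl⟩ := hy1
      rw [Set.mem_singleton_iff] at ht
      rw [Set.mem_neg] at hy2
      rw [ht] at hy2 ⊢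
      have habK' : a - b ∈ K' := by rwa [neg_sub] at hy2
      obtain ⟨k, hk, hae⟩ := aux_mem_singleton_sub.1 haS.1
      have hbS : b ∈ S := by
        refine ⟨aux_mem_singleton_sub.2 ⟨k + (a - b), hKadd _ hk _ (hK'K habK'), ?_⟩, hbA⟩
        rw [hae]; abel
      have h1 : a - b ∈ W := subset_closure habK'
      have h2 : b - a ∈ W := hminpt b hbS h1
      have h3 : a - b = 0 := hWpointed _ h1 (by rwa [neg_sub])
      rw [Set.mem_singleton_iff]
      have : b - a = -(a - b) := by abel
      rw [this, h3, neg_zero]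
    · intro y hy
      rw [Set.mem_singleton_iff] at hy
      subst hy
      constructor
      · rw [Set.mem_sub]
        exact ⟨a, haS.2, a, Set.mem_singleton a, sub_self a⟩
      · rw [Set.mem_neg, neg_zero]
        exact hK'0
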